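/- arXiv:1612.05954 — 9 statements merged into one kernel-verified Lean document; each statement's English description precedes it below -/
import Mathlib

section
/- Let c, d, e, r, s ∈ B with d⟨c⟩ = e⟨c⟩ and r⟨c⟩ = s⟨c⟩, and let c have infinite order. Then for every finitely supported g : B → A, the products π_{r,c}^{(d)}(g) := ∏_{j∈ℤ} g(r c^j d⁻¹) and π_{s,c}^{(e)}(g) := ∏_{j∈ℤ} g(s c^j e⁻¹) (taken in increasing order of j over the finitely many nontrivial factors) are equal. -/
/-- The ordered product `∏_{j=-N}^{N} h j` (increasing order of `j`), a window of the
doubly infinite product `∏_{j∈ℤ} h j`, which is well defined once all factors outside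
the window are trivial. -/
def windowProd {A : Type*} [Group A] (h : ℤ → A) (N : ℕ) : A :=
  ((List.range (2 * N + 1)).map fun k => h ((k : ℤ) - N)).prod

namespace PiAux

variable {A : Type*} [Group A]

/-- Product of `h` over `[a, a+n]` in increasing order. -/
def iProd (h : ℤ → A) (a : ℤ) (n : ℕ) : A :=
  ((List.range (n + 1)).map fun k : ℕ => h (a + (k : ℤ))).prod

lemma iProd_succ_right (h : ℤ → A) (a : ℤ) (n : ℕ) :
    iProd h a (n + 1) = iProd h a n * h (a + (n + 1)) := by
  simp [iProd, List.range_succ, mul_assoc]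

lemma iProd_succ_left (h : ℤ → A) (a : ℤ) (n : ℕ) :
    iProd h a (n + 1) = h a * iProd h (a + 1) n := by
  rw [iProd, iProd, List.range_succ_eq_map, List.map_cons, List.prod_cons, List.map_map]
  congr 1
  · norm_num
  · congr 1
    apply List.map_congr_left
    intro k _
    simp only [Function.comp]
    congr 1
    push_cast
    ring

lemma iProd_ext_right (h : ℤ → A) (a : ℤ) (n m : ℕ)
    (hv : ∀ j, a + n < j → h j = 1) :
    iProd h a (n + m) = iProd h a n := by
  induction m with
  | zero => rfl
  | succ m ih =>
      have : n + (m + 1) = (n + m) + 1 := rfl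
      rw [this, iProd_succ_right, ih, hv, mul_one]
      push_cast; omega

lemma iProd_ext_left (h : ℤ → A) (a : ℤ) (n m : ℕ)
    (hv : ∀ j, j < a → h j = 1) :
    iProd h (a - m) (n + m) = iProd h a n := by
  induction m with
  | zero => simp
  | succ m ih =>
      have e1 : n + (m + 1) = (n + m) + 1 := rfl
      rw [e1, iProd_succ_left, hv _ (by push_cast; omega), one_mul]
      have e2 : a - (m + 1 : ℕ) + 1 = a - m := by push_cast; ring
      rw [e2, ih]

lemma iProd_extend (h : ℤ → A) (a : ℤ) (n m₁ m₂ : ℕ)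
    (hv : ∀ j, j < a ∨ a + n < j → h j = 1) :
    iProd h (a - m₁) (n + m₁ + m₂) = iProd h a n := by
  have h1 : iProd h (a - m₁) ((n + m₁) + m₂) = iProd h (a - m₁) (n + m₁) := by
    apply iProd_ext_right
    intro j hj
    exact hv j (Or.inr (by push_cast at hj ⊢; omega))
  rw [h1, iProd_ext_left]
  intro j hj
  exact hv j (Or.inl hj)

lemma windowProd_eq_iProd (h : ℤ → A) (N : ℕ) :
    windowProd h N = iProd h (-(N : ℤ)) (2 * N) := by
  rw [windowProd, iProd]
  congr 1
  simp only [bind_pure_comp, List.map_eq_map, List.map_map]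
  apply List.map_congr_left
  intro k _
  simp only [Function.comp]
  congr 1
  push_cast
  ring

lemma iProd_shift (h : ℤ → A) (t a : ℤ) (n : ℕ) :
    iProd (fun j => h (j + t)) a n = iProd h (a + t) n := by
  rw [iProd, iProd]
  congr 1
  apply List.map_congr_left
  intro k _
  congr 1
  ring

end PiAux

/-- Let `c, d, e, r, s ∈ B` with `d⟨c⟩ = e⟨c⟩` and `r⟨c⟩ = s⟨c⟩`, and let `c` have
infinite order. Then for every finitely supported `g : B → A`, the products
`π_{r,c}^{(d)}(g) = ∏_{j∈ℤ} g (r c^j d⁻¹)` and `π_{s,c}^{(e)}(g) = ∏_{j∈ℤ} g (s c^j e⁻¹)`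
(taken in increasing order of `j`, over any window containing all nontrivial factors)
are equal. -/
theorem pi_prod_rep_independent_infinite {A B : Type*} [Group A] [Group B]
    (g : B → A) (hg : (Function.mulSupport g).Finite)
    (c d e r s : B) (hc : ¬ IsOfFinOrder c)
    (hde : (fun x => d * x) '' (Subgroup.zpowers c : Set B)
         = (fun x => e * x) '' (Subgroup.zpowers c : Set B))
    (hrs : (fun x => r * x) '' (Subgroup.zpowers c : Set B)
         = (fun x => s * x) '' (Subgroup.zpowers c : Set B))
    (N M : ℕ)
    (hN : ∀ j : ℤ, (N : ℤ) < |j| → g (r * c ^ j * d⁻¹) = 1)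
    (hM : ∀ j : ℤ, (M : ℤ) < |j| → g (s * c ^ j * e⁻¹) = 1) :
    windowProd (fun j => g (r * c ^ j * d⁻¹)) N
      = windowProd (fun j => g (s * c ^ j * e⁻¹)) M := by
  classical
  -- e = d * c ^ a
  obtain ⟨x, hx, hxe⟩ : e ∈ (fun x => d * x) '' (Subgroup.zpowers c : Set B) := by
    rw [hde]; exact ⟨1, Subgroup.one_mem _, by simp⟩
  obtain ⟨a, ha⟩ := Subgroup.mem_zpowers_iff.mp hx
  -- s = r * c ^ b
  obtain ⟨y, hy, hys⟩ : s ∈ (fun x => r * x) '' (Subgroup.zpowers c : Set B) := by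
    rw [hrs]; exact ⟨1, Subgroup.one_mem _, by simp⟩
  obtain ⟨b, hb⟩ := Subgroup.mem_zpowers_iff.mp hy
  have he : e = d * c ^ a := by rw [← hxe, ha]
  have hs : s = r * c ^ b := by rw [← hys, hb]
  set t : ℤ := b - a with ht
  have key : ∀ j : ℤ, s * c ^ j * e⁻¹ = r * c ^ (j + t) * d⁻¹ := by
    intro j
    rw [hs, he, ht]
    group
  set h₁ : ℤ → A := fun j => g (r * c ^ j * d⁻¹) with hh₁
  have hfun : (fun j : ℤ => g (s * c ^ j * e⁻¹)) = fun j => h₁ (j + t) := by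
    funext j; rw [key j]
  rw [hfun, PiAux.windowProd_eq_iProd, PiAux.windowProd_eq_iProd, PiAux.iProd_shift]
  -- vanishing facts
  have hv₁ : ∀ j : ℤ, j < -(N : ℤ) ∨ -(N : ℤ) + (2 * N : ℕ) < j → h₁ j = 1 := by
    intro j hj
    apply hN
    push_cast at hj
    rcases le_or_gt 0 j with h0 | h0
    · rw [abs_of_nonneg h0]; omega
    · rw [abs_of_neg h0]; omega
  have hv₂ : ∀ j : ℤ, j < -(M : ℤ) + t ∨ (-(M : ℤ) + t) + (2 * M : ℕ) < j → h₁ j = 1 := by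
    intro j hj
    have : h₁ j = g (s * c ^ (j - t) * e⁻¹) := by rw [key (j - t)]; simp [hh₁]
    rw [this]
    apply hM
    push_cast at hj
    rcases le_or_gt 0 (j - t) with h0 | h0
    · rw [abs_of_nonneg h0]; omega
    · rw [abs_of_neg h0]; omega
  set A0 : ℤ := min (-(N : ℤ)) (-(M : ℤ) + t) with hA0
  set T : ℤ := max (N : ℤ) ((M : ℤ) + t) with hT
  have e1 := PiAux.iProd_extend h₁ (-(N : ℤ)) (2 * N)
      ((-(N : ℤ) - A0).toNat) ((T - N).toNat) hv₁
  have e2 := PiAux.iProd_extend h₁ (-(M : ℤ) + t) (2 * M)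
      ((-(M : ℤ) + t - A0).toNat) ((T - ((M : ℤ) + t)).toNat) hv₂
  rw [← e1, ← e2]
  have hbase : -(N : ℤ) - ((-(N : ℤ) - A0).toNat : ℤ)
      = -(M : ℤ) + t - ((-(M : ℤ) + t - A0).toNat : ℤ) := by
    have h1 : A0 ≤ -(N : ℤ) := min_le_left _ _
    have h2 : A0 ≤ -(M : ℤ) + t := min_le_right _ _
    omega
  have hlen : 2 * N + (-(N : ℤ) - A0).toNat + (T - N).toNat
      = 2 * M + (-(M : ℤ) + t - A0).toNat + (T - ((M : ℤ) + t)).toNat := by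
    have h1 : A0 ≤ -(N : ℤ) := min_le_left _ _
    have h2 : A0 ≤ -(M : ℤ) + t := min_le_right _ _
    have h3 : (N : ℤ) ≤ T := le_max_left _ _
    have h4 : (M : ℤ) + t ≤ T := le_max_right _ _
    omega
  rw [hbase, hlen]
end

section
/- Let c, d, e, r, s ∈ B with d⟨c⟩ = e⟨c⟩ and r⟨c⟩ = s⟨c⟩, where c has finite order N. Then for every finitely supported g : B → A, the element π_{r,c}^{(d)}(g) := ∏_{j=0}^{N-1} g(r c^j d⁻¹) is conjugate in A to π_{s,c}^{(e)}(g) := ∏_{j=0}^{N-1} g(s c^j e⁻¹). -/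
private lemma isConj_prod_rotate {A : Type*} [Group A] (l : List A) (n : ℕ) :
    IsConj l.prod ((l.rotate n).prod) := by
  rcases Nat.eq_zero_or_pos l.length with h | h
  · rw [List.length_eq_zero_iff] at h; subst h; simp
  rw [← List.rotate_mod, List.rotate_eq_drop_append_take (Nat.le_of_lt (Nat.mod_lt _ h)),
    List.prod_append, isConj_iff]
  refine ⟨((l.take (n % l.length)).prod)⁻¹, ?_⟩
  have : l.prod = (l.take (n % l.length)).prod * (l.drop (n % l.length)).prod := by
    rw [← List.prod_append, List.take_append_drop]
  rw [this]; group

/-- Let `c, d, e, r, s ∈ B` with `d⟨c⟩ = e⟨c⟩` and `r⟨c⟩ = s⟨c⟩`, where `c` has finite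
order `N`. Then for every finitely supported `g : B → A`, the element
`π_{r,c}^{(d)}(g) = ∏_{j=0}^{N-1} g (r c^j d⁻¹)` is conjugate in `A` to
`π_{s,c}^{(e)}(g) = ∏_{j=0}^{N-1} g (s c^j e⁻¹)` (products in increasing order of `j`). -/
theorem pi_prod_rep_conjugate_finite {A B : Type*} [Group A] [Group B]
    (g : B → A) (hg : (Function.mulSupport g).Finite)
    (c d e r s : B) (N : ℕ) (hN : 0 < N) (hc : orderOf c = N)
    (hde : (fun x => d * x) '' (Subgroup.zpowers c : Set B)
         = (fun x => e * x) '' (Subgroup.zpowers c : Set B))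
    (hrs : (fun x => r * x) '' (Subgroup.zpowers c : Set B)
         = (fun x => s * x) '' (Subgroup.zpowers c : Set B)) :
    IsConj (((List.range N).map fun j => g (r * c ^ j * d⁻¹)).prod)
           (((List.range N).map fun j => g (s * c ^ j * e⁻¹)).prod) := by
  -- extract k with e = d * c ^ k
  have he : e ∈ (fun x => e * x) '' (Subgroup.zpowers c : Set B) :=
    ⟨1, Subgroup.one_mem _, mul_one e⟩
  rw [← hde] at he
  obtain ⟨x, hx, hxe⟩ := he
  obtain ⟨k, hk⟩ := hx
  have hek : e = d * c ^ k := by simp only [← hxe, ← hk]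
  -- extract m with s = r * c ^ m
  have hs : s ∈ (fun x => s * x) '' (Subgroup.zpowers c : Set B) :=
    ⟨1, Subgroup.one_mem _, mul_one s⟩
  rw [← hrs] at hs
  obtain ⟨y, hy, hys⟩ := hs
  obtain ⟨m, hm⟩ := hy
  have hsm : s = r * c ^ m := by simp only [← hys, ← hm]
  set t : ℕ := ((m - k) % (N : ℤ)).toNat with ht
  have hNZ : (0 : ℤ) < (N : ℤ) := by exact_mod_cast hN
  have htZ : (t : ℤ) = (m - k) % (N : ℤ) :=
    Int.toNat_of_nonneg (Int.emod_nonneg _ (ne_of_gt hNZ))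
  have hlist : ((List.range N).map fun j => g (s * c ^ j * e⁻¹))
      = (((List.range N).map fun j => g (r * c ^ j * d⁻¹)).rotate t) := by
    apply List.ext_getElem
    · simp
    · intro i h1 h2
      have hiN : i < N := by simpa using h1
      have hlen : ((List.range N).map fun j => g (r * c ^ j * d⁻¹)).length = N := by simp
      rw [List.getElem_rotate]
      simp only [List.getElem_map, List.getElem_range, hlen]
      congr 1
      -- show s * c ^ i * e⁻¹ = r * c ^ ((i + t) % N) * d⁻¹
      have key : c ^ ((m : ℤ) + i - k) = c ^ ((((i + t) % N : ℕ)) : ℤ) := by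
        rw [zpow_eq_zpow_iff_modEq, hc]
        have h3 : ((((i + t) % N : ℕ)) : ℤ) = ((i : ℤ) + t) % (N : ℤ) := by push_cast; ring_nf
        rw [h3]
        have h4 : ((i : ℤ) + t) % (N : ℤ) ≡ (i : ℤ) + t [ZMOD (N : ℤ)] :=
          Int.emod_emod_of_dvd _ dvd_rfl
        refine (Int.ModEq.symm (h4.trans ?_))
        rw [htZ]
        calc (i : ℤ) + (m - k) % (N : ℤ) ≡ (i : ℤ) + (m - k) [ZMOD (N : ℤ)] :=
              Int.ModEq.add_left _ (Int.emod_emod_of_dvd _ dvd_rfl)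
          _ = (m : ℤ) + i - k := by ring
      rw [hsm, hek, mul_inv_rev]
      have h5 : r * c ^ m * c ^ i * ((c ^ k)⁻¹ * d⁻¹) = r * c ^ ((m : ℤ) + i - k) * d⁻¹ := by
        rw [zpow_sub, zpow_add, zpow_natCast]; group
      rw [h5, key, zpow_natCast]
  rw [hlist]
  exact isConj_prod_rotate _ t
end

section
/- Two elements (b,f) and (c,g) of A ≀ B with b of finite order N are conjugate if, and only if, there exists d ∈ B such that db = cd and for all t in a full system T of ⟨b⟩-coset representatives, π_{t,b}(f) := ∏_{j=0}^{N-1} f(t b^j) is conjugate in A to π_{t,b}^{(d)}(g) := ∏_{j=0}^{N-1} g(t b^j d⁻¹). -/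
/-- The restricted wreath product `A ≀ B = B ⋉ A^(B)`: pairs `(b, f)` with `f : B → A`
finitely supported, multiplication `(b,f)(c,g) = (bc, f^c g)` where `f^b x = f (x b⁻¹)`. -/
structure Wreath (A B : Type*) [Group A] [Group B] where
  b : B
  f : B → A
  fin : (Function.mulSupport f).Finite

namespace Wreath

variable {A B : Type*} [Group A] [Group B]

theorem ext' {x y : Wreath A B} (hb : x.b = y.b) (hf : x.f = y.f) : x = y := by
  cases x; cases y; cases hb; cases hf; rfl

lemma fin_shift {f : B → A} (h : (Function.mulSupport f).Finite) (c : B) :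
    (Function.mulSupport fun x => f (x * c)).Finite := by
  have he : (Function.mulSupport fun x => f (x * c))
      = (fun x : B => x * c) ⁻¹' Function.mulSupport f := rfl
  rw [he]
  exact Set.Finite.preimage (mul_left_injective c).injOn h

instance : One (Wreath A B) :=
  ⟨⟨1, 1, by simp⟩⟩

instance : Mul (Wreath A B) :=
  ⟨fun x y => ⟨x.b * y.b, fun z => x.f (z * y.b⁻¹) * y.f z,
    (((fin_shift x.fin y.b⁻¹).union y.fin).subset
      (Function.mulSupport_mul (fun z => x.f (z * y.b⁻¹)) y.f))⟩⟩

instance : Inv (Wreath A B) :=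
  ⟨fun x => ⟨x.b⁻¹, fun z => (x.f (z * x.b))⁻¹, by
    have he : (Function.mulSupport fun z => (x.f (z * x.b))⁻¹)
        = Function.mulSupport fun z => x.f (z * x.b) :=
      Function.mulSupport_inv _
    rw [he]; exact fin_shift x.fin x.b⟩⟩

@[simp] lemma mul_b (x y : Wreath A B) : (x * y).b = x.b * y.b := rfl
@[simp] lemma mul_f (x y : Wreath A B) (z : B) :
    (x * y).f z = x.f (z * y.b⁻¹) * y.f z := rfl
@[simp] lemma one_b : (1 : Wreath A B).b = 1 := rfl
@[simp] lemma one_f (z : B) : (1 : Wreath A B).f z = 1 := rfl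
@[simp] lemma inv_b (x : Wreath A B) : (x⁻¹).b = x.b⁻¹ := rfl
@[simp] lemma inv_f (x : Wreath A B) (z : B) : (x⁻¹).f z = (x.f (z * x.b))⁻¹ := rfl

instance : Group (Wreath A B) where
  mul_assoc x y z := ext' (mul_assoc _ _ _) (by
    funext w; simp [mul_assoc, mul_inv_rev])
  one_mul x := ext' (one_mul _) (by funext w; simp)
  mul_one x := ext' (mul_one _) (by funext w; simp)
  inv_mul_cancel x := ext' (inv_mul_cancel _) (by funext w; simp)

end Wreath


private lemma wreath_forward_aux {A B : Type*} [Group A] [Group B]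
    (f g h : B → A) (b d : B) (N : ℕ) (hbN : b ^ N = 1)
    (hrel : ∀ w : B, h (w * b⁻¹) * f w = g (w * d⁻¹) * h w) (t : B) :
    IsConj (((List.range N).map fun j => f (t * b ^ j)).prod)
           (((List.range N).map fun j => g (t * b ^ j * d⁻¹)).prod) := by
  have key : ∀ n : ℕ, ((List.range n).map fun j => g (t * b ^ j * d⁻¹)).prod
      = h (t * b⁻¹) * ((List.range n).map fun j => f (t * b ^ j)).prod
        * (h (t * b ^ n * b⁻¹))⁻¹ := by
    intro n
    induction n with
    | zero => simp
    | succ n ih =>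
      rw [List.range_succ, List.map_append, List.prod_append, List.map_append,
        List.prod_append, ih]
      have h1 : g (t * b ^ n * d⁻¹)
          = h (t * b ^ n * b⁻¹) * f (t * b ^ n) * (h (t * b ^ n))⁻¹ := by
        rw [eq_mul_inv_iff_mul_eq]; exact (hrel (t * b ^ n)).symm
      have h2 : t * b ^ (n + 1) * b⁻¹ = t * b ^ n := by rw [pow_succ]; group
      simp only [List.map_cons, List.map_nil, List.prod_cons, List.prod_nil, h1, h2]
      group
  rw [isConj_iff]
  refine ⟨h (t * b⁻¹), ?_⟩
  rw [key N, hbN]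
  simp

/-- Matthews' conjugacy criterion, finite order case: two elements `x = (b,f)` and
`y = (c,g)` of `A ≀ B` with `b` of finite order `N` are conjugate iff there is `d ∈ B`
with `db = cd` such that for all `t` in a full system `T` of `⟨b⟩`-coset representatives,
`π_{t,b}(f) = ∏_{j=0}^{N-1} f (t b^j)` is conjugate in `A` to
`π_{t,b}^{(d)}(g) = ∏_{j=0}^{N-1} g (t b^j d⁻¹)` (products in increasing order of `j`). -/
theorem wreath_conj_iff_finite_order {A B : Type*} [Group A] [Group B]
    (x y : Wreath A B) (N : ℕ) (hN : 0 < N) (hb : orderOf x.b = N) (T : Set B)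
    (hcov : (⋃ t ∈ T, (fun z => t * z) '' (Subgroup.zpowers x.b : Set B)) = Set.univ)
    (hdisj : ∀ t ∈ T, ∀ t' ∈ T, t ≠ t' →
      ((fun z => t * z) '' (Subgroup.zpowers x.b : Set B)) ∩
        ((fun z => t' * z) '' (Subgroup.zpowers x.b : Set B)) = ∅) :
    IsConj x y ↔ ∃ d : B, d * x.b = y.b * d ∧ ∀ t ∈ T,
      IsConj (((List.range N).map fun j => x.f (t * x.b ^ j)).prod)
             (((List.range N).map fun j => y.f (t * x.b ^ j * d⁻¹)).prod) := by
  classical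
  have hbN : x.b ^ N = 1 := by rw [← hb]; exact pow_orderOf_eq_one x.b
  constructor
  · intro hxy
    obtain ⟨z, hz⟩ := isConj_iff.mp hxy
    have hzx : z * x = y * z := by rw [← hz]; group
    refine ⟨z.b, by simpa using congrArg Wreath.b hzx, fun t _ => ?_⟩
    refine wreath_forward_aux x.f y.f z.f x.b z.b N hbN (fun w => ?_) t
    simpa using congrFun (congrArg Wreath.f hzx) w
  · rintro ⟨d, hd, hconj⟩
    set b := x.b with hbdef
    have hbinv : b⁻¹ = b ^ (N - 1) := by
      symm
      rw [eq_inv_iff_mul_eq_one, ← pow_succ, Nat.sub_add_cancel hN, hbN]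
    -- decomposition of every element of B as t * b^j with t ∈ T, j < N
    have hdecomp : ∀ v : B, ∃ t j, t ∈ T ∧ j < N ∧ v = t * b ^ j := by
      intro v
      have hv : v ∈ (⋃ t ∈ T, (fun z => t * z) '' (Subgroup.zpowers x.b : Set B)) := by
        rw [hcov]; trivial
      simp only [Set.mem_iUnion, Set.mem_image] at hv
      obtain ⟨t, ht, z, hz, hzv⟩ := hv
      obtain ⟨m, hm⟩ := hz
      refine ⟨t, (m % N).toNat, ht, ?_, ?_⟩
      · have h1 : m % (N : ℤ) < N := Int.emod_lt_of_pos m (by exact_mod_cast hN)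
        omega
      · have h0 : (0:ℤ) ≤ m % N := Int.emod_nonneg m (by exact_mod_cast hN.ne')
        rw [← hzv, ← hm, ← zpow_natCast, Int.toNat_of_nonneg h0, ← hb, zpow_mod_orderOf]
    choose tOf jOf htT hjlt hvEq using hdecomp
    have hpowinj : ∀ i, i < N → ∀ j, j < N → b ^ i = b ^ j → i = j := by
      intro i hi j hj hij
      exact pow_injOn_Iio_orderOf (by rw [hb]; exact hi) (by rw [hb]; exact hj) hij
    have huniq : ∀ t, t ∈ T → ∀ j, j < N → tOf (t * b ^ j) = t ∧ jOf (t * b ^ j) = j := by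
      intro t ht j hj
      have hmemz : ∀ k : ℕ, b ^ k ∈ (Subgroup.zpowers x.b : Set B) := fun k =>
        ⟨(k : ℤ), zpow_natCast b k⟩
      have h1 : tOf (t * b ^ j) = t := by
        by_contra hne
        have hmem1 : t * b ^ j ∈ (fun z => tOf (t * b ^ j) * z) ''
            (Subgroup.zpowers x.b : Set B) :=
          ⟨b ^ jOf (t * b ^ j), hmemz _, (hvEq (t * b ^ j)).symm⟩
        have hmem2 : t * b ^ j ∈ (fun z => t * z) '' (Subgroup.zpowers x.b : Set B) :=
          ⟨b ^ j, hmemz _, rfl⟩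
        have hE := hdisj _ (htT (t * b ^ j)) t ht hne
        exact absurd (hE ▸ Set.mem_inter hmem1 hmem2) (Set.notMem_empty _)
      have h2 : jOf (t * b ^ j) = j := by
        apply hpowinj _ (hjlt (t * b ^ j)) _ hj
        have hE := hvEq (t * b ^ j)
        rw [h1] at hE
        exact mul_left_cancel hE.symm
      exact ⟨h1, h2⟩
    -- partial products
    let PF : B → ℕ → A := fun t n => ((List.range n).map fun i => x.f (t * b ^ i)).prod
    let PG : B → ℕ → A := fun t n => ((List.range n).map fun i => y.f (t * b ^ i * d⁻¹)).prod
    have hPFsucc : ∀ t n, PF t (n + 1) = PF t n * x.f (t * b ^ n) := by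
      intro t n
      simp only [PF, List.range_succ, List.map_append, List.prod_append,
        List.map_cons, List.map_nil, List.prod_cons, List.prod_nil, mul_one]
    have hPGsucc : ∀ t n, PG t (n + 1) = PG t n * y.f (t * b ^ n * d⁻¹) := by
      intro t n
      simp only [PG, List.range_succ, List.map_append, List.prod_append,
        List.map_cons, List.map_nil, List.prod_cons, List.prod_nil, mul_one]
    -- choose conjugating elements, trivial where possible
    have hkey : ∀ t : B, ∃ a : A, (t ∈ T → PG t N = a * PF t N * a⁻¹) ∧
        ((∀ i, i < N → x.f (t * b ^ i) = 1 ∧ y.f (t * b ^ i * d⁻¹) = 1) → a = 1) := by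
      intro t
      by_cases htriv : ∀ i, i < N → x.f (t * b ^ i) = 1 ∧ y.f (t * b ^ i * d⁻¹) = 1
      · refine ⟨1, fun _ => ?_, fun _ => rfl⟩
        have hf1 : PF t N = 1 := List.prod_eq_one (by
          intro u hu
          simp only [List.mem_map, List.mem_range] at hu
          obtain ⟨i, hi, rfl⟩ := hu
          exact (htriv i hi).1)
        have hg1 : PG t N = 1 := List.prod_eq_one (by
          intro u hu
          simp only [List.mem_map, List.mem_range] at hu
          obtain ⟨i, hi, rfl⟩ := hu
          exact (htriv i hi).2)
        rw [hf1, hg1]; group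
      · by_cases ht : t ∈ T
        · obtain ⟨a, ha⟩ := isConj_iff.mp (hconj t ht)
          exact ⟨a, fun _ => ha.symm, fun hc => absurd hc htriv⟩
        · exact ⟨1, fun hc => absurd hc ht, fun _ => rfl⟩
    choose aOf haconj hatriv using hkey
    -- the conjugating function
    let h : B → A := fun v => (PG (tOf v) (jOf v + 1))⁻¹ * aOf (tOf v) * PF (tOf v) (jOf v + 1)
    have heval : ∀ v, h v = (PG (tOf v) (jOf v + 1))⁻¹ * aOf (tOf v) * PF (tOf v) (jOf v + 1) :=
      fun v => rfl
    have hlast : ∀ t, t ∈ T → h (t * b ^ (N - 1)) = aOf t := by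
      intro t ht
      rw [heval, (huniq t ht (N - 1) (by omega)).1, (huniq t ht (N - 1) (by omega)).2,
        Nat.sub_add_cancel hN, haconj t ht]
      group
    -- finite support
    have hfin : (Function.mulSupport h).Finite := by
      set S : Set B := Function.mulSupport x.f ∪ (fun w => w * d) '' Function.mulSupport y.f
        with hS
      have hSfin : S.Finite := x.fin.union (y.fin.image _)
      apply Set.Finite.subset (Set.Finite.biUnion (Set.finite_Iio N) fun i _ =>
        Set.Finite.biUnion (Set.finite_Iio N) fun j _ =>
          hSfin.image fun s => s * (b ^ i)⁻¹ * b ^ j)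
      intro v hv
      have hntriv : ¬ (∀ i, i < N → x.f (tOf v * b ^ i) = 1
          ∧ y.f (tOf v * b ^ i * d⁻¹) = 1) := by
        intro htriv
        apply hv
        have hprod1 : PF (tOf v) (jOf v + 1) = 1 := List.prod_eq_one (by
          intro u hu
          simp only [List.mem_map, List.mem_range] at hu
          obtain ⟨i, hi, rfl⟩ := hu
          exact (htriv i (lt_of_lt_of_le hi (Nat.succ_le_of_lt (hjlt v)))).1)
        have hprod2 : PG (tOf v) (jOf v + 1) = 1 := List.prod_eq_one (by
          intro u hu
          simp only [List.mem_map, List.mem_range] at hu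
          obtain ⟨i, hi, rfl⟩ := hu
          exact (htriv i (lt_of_lt_of_le hi (Nat.succ_le_of_lt (hjlt v)))).2)
        show h v = 1
        rw [heval, hprod1, hprod2, hatriv _ htriv]
        group
      push_neg at hntriv
      obtain ⟨i, hiN, hbad⟩ := hntriv
      have hmemS : tOf v * b ^ i ∈ S := by
        by_cases hx : x.f (tOf v * b ^ i) = 1
        · exact Or.inr ⟨tOf v * b ^ i * d⁻¹, hbad hx, by group⟩
        · exact Or.inl hx
      refine Set.mem_biUnion (Set.mem_Iio.mpr hiN) (Set.mem_biUnion
        (Set.mem_Iio.mpr (hjlt v)) ⟨tOf v * b ^ i, hmemS, ?_⟩)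
      show tOf v * b ^ i * (b ^ i)⁻¹ * b ^ jOf v = v
      have he : tOf v * b ^ i * (b ^ i)⁻¹ * b ^ jOf v = tOf v * b ^ jOf v := by group
      rw [he]
      exact (hvEq v).symm
    -- the semiconjugating relation
    have hrel0 : ∀ t, t ∈ T → ∀ j, j < N →
        h (t * b ^ j * b⁻¹) * x.f (t * b ^ j) = y.f (t * b ^ j * d⁻¹) * h (t * b ^ j) := by
      intro t ht j hj
      have hu := huniq t ht j hj
      rcases j with _ | k
      · have hw1 : t * b ^ 0 * b⁻¹ = t * b ^ (N - 1) := by rw [pow_zero, mul_one, hbinv]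
        have hPG1 : PG t 1 = y.f (t * b ^ 0 * d⁻¹) := by
          rw [hPGsucc t 0]; simp [PG]
        have hPF1 : PF t 1 = x.f (t * b ^ 0) := by
          rw [hPFsucc t 0]; simp [PF]
        rw [hw1, hlast t ht, heval, hu.1, hu.2, hPG1, hPF1]
        group
      · have hkN : k < N := by omega
        have huk := huniq t ht k hkN
        have hw1 : t * b ^ (k + 1) * b⁻¹ = t * b ^ k := by rw [pow_succ]; group
        rw [hw1, heval (t * b ^ k), heval (t * b ^ (k + 1)), huk.1, huk.2, hu.1, hu.2,
          hPGsucc t (k + 1), hPFsucc t (k + 1)]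
        group
    have hrel : ∀ w : B, h (w * b⁻¹) * x.f w = y.f (w * d⁻¹) * h w := by
      intro w
      have hr := hrel0 (tOf w) (htT w) (jOf w) (hjlt w)
      rw [hvEq w]
      exact hr
    -- assemble
    refine isConj_iff.mpr ⟨⟨d, h, hfin⟩, ?_⟩
    rw [mul_inv_eq_iff_eq_mul]
    apply Wreath.ext'
    · exact hd
    · funext w
      show h (w * x.b⁻¹) * x.f w = y.f (w * d⁻¹) * h w
      exact hrel w
end

section
/- Let x = (b,f) and y = (c,g) ∈ A ≀ B with b conjugate to c in B, b of infinite order, and suppose π_{t,b}(f) = 1 for all t ∈ supp(f). Then x is conjugate to y if, and only if, π_{s,c}(g) = 1 for all s ∈ supp(g). -/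
namespace WPi

variable {A : Type*} [Group A]

lemma abs_gt_iff {N j : ℤ} : N < |j| ↔ j < -N ∨ N < j := by
  rw [Int.abs_eq_natAbs]; omega

/-- Ordered product `h a * h (a+1) * ⋯ * h b`. -/
def IccProd (h : ℤ → A) (a b : ℤ) : A :=
  ((List.range (b + 1 - a).toNat).map fun k : ℕ => h (a + (k : ℤ))).prod

lemma IccProd_congr {h h' : ℤ → A} (e : ∀ j, h j = h' j) (a b : ℤ) :
    IccProd h a b = IccProd h' a b := by
  unfold IccProd
  congr 1
  exact List.map_congr_left fun k _ => e _

lemma windowProd_eq (h : ℤ → A) (N : ℕ) :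
    windowProd h N = IccProd h (-(N : ℤ)) N := by
  unfold windowProd IccProd
  simp only [List.pure_def, List.bind_eq_flatMap, ← List.map_eq_flatMap, List.map_map]
  have : ((N : ℤ) + 1 - (-(N : ℤ))).toNat = 2 * N + 1 := by omega
  rw [this]
  congr 1
  refine List.map_congr_left fun k _ => ?_
  simp only [Function.comp_apply]
  congr 1
  ring

lemma IccProd_empty (h : ℤ → A) {a b : ℤ} (hab : b < a) : IccProd h a b = 1 := by
  unfold IccProd
  have : (b + 1 - a).toNat = 0 := by omega
  rw [this]; simp

lemma IccProd_self (h : ℤ → A) (a : ℤ) : IccProd h a a = h a := by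
  unfold IccProd
  have : (a + 1 - a).toNat = 1 := by omega
  rw [this]
  simp [List.range_succ]

lemma IccProd_succ_right (h : ℤ → A) {a b : ℤ} (hab : a ≤ b + 1) :
    IccProd h a (b + 1) = IccProd h a b * h (b + 1) := by
  unfold IccProd
  have h1 : (b + 1 + 1 - a).toNat = (b + 1 - a).toNat + 1 := by omega
  rw [h1, List.range_succ, List.map_append, List.prod_append]
  simp only [List.map_cons, List.map_nil, List.prod_cons, List.prod_nil, mul_one]
  congr 2
  omega

lemma IccProd_pred_left (h : ℤ → A) {a b : ℤ} (hab : a ≤ b + 1) :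
    IccProd h (a - 1) b = h (a - 1) * IccProd h a b := by
  unfold IccProd
  have h1 : (b + 1 - (a - 1)).toNat = (b + 1 - a).toNat + 1 := by omega
  rw [h1, List.range_succ_eq_map]
  simp only [List.map_cons, List.prod_cons, List.map_map]
  congr 2
  · simp
  · refine List.map_congr_left fun k _ => ?_
    simp only [Function.comp_apply]
    congr 1
    push_cast
    ring

lemma IccProd_shift (h : ℤ → A) (c a b : ℤ) :
    IccProd (fun j => h (j + c)) a b = IccProd h (a + c) (b + c) := by
  unfold IccProd
  have : (b + c + 1 - (a + c)).toNat = (b + 1 - a).toNat := by omega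
  rw [this]
  congr 1
  refine List.map_congr_left fun k _ => ?_
  congr 1
  ring

lemma IccProd_eq_one (h : ℤ → A) {a b : ℤ}
    (hv : ∀ j, a ≤ j → j ≤ b → h j = 1) : IccProd h a b = 1 := by
  unfold IccProd
  refine List.prod_eq_one fun x hx => ?_
  obtain ⟨k, hk, rfl⟩ := List.mem_map.1 hx
  rw [List.mem_range] at hk
  exact hv _ (by omega) (by omega)

lemma exists_ne_one_of_IccProd_ne_one {h : ℤ → A} {a b : ℤ}
    (hne : IccProd h a b ≠ 1) : ∃ j, a ≤ j ∧ j ≤ b ∧ h j ≠ 1 := by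
  by_contra hc
  push_neg at hc
  exact hne (IccProd_eq_one h fun j h1 h2 => hc j h1 h2)

lemma IccProd_ext_right (h : ℤ → A) {a b b' : ℤ} (hbb' : b ≤ b')
    (hv : ∀ j, b < j → h j = 1) : IccProd h a b' = IccProd h a b := by
  obtain ⟨n, rfl⟩ : ∃ n : ℕ, b' = b + n := ⟨(b' - b).toNat, by omega⟩
  induction n with
  | zero => simp
  | succ n ih =>
    by_cases hab : a ≤ b + 1
    · have e : b + ((n : ℕ) + 1 : ℕ) = (b + n) + 1 := by push_cast; ring
      rw [e, IccProd_succ_right h (by omega), hv _ (by omega), mul_one, ih (by omega)]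
    · have h1 : IccProd h a (b + ((n + 1 : ℕ) : ℤ)) = 1 :=
        IccProd_eq_one h fun j hj _ => hv j (by omega)
      have h2 : IccProd h a b = 1 := IccProd_empty h (by omega)
      rw [h1, h2]

lemma IccProd_ext_left (h : ℤ → A) {a a' b : ℤ} (haa' : a' ≤ a)
    (hv : ∀ j, j < a → h j = 1) : IccProd h a' b = IccProd h a b := by
  obtain ⟨n, rfl⟩ : ∃ n : ℕ, a' = a - n := ⟨(a - a').toNat, by omega⟩
  induction n with
  | zero => simp
  | succ n ih =>
    by_cases hab : a ≤ b + 1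
    · have e : a - ((n : ℕ) + 1 : ℕ) = (a - n) - 1 := by push_cast; ring
      rw [e, IccProd_pred_left h (by omega), hv _ (by omega), one_mul, ih (by omega)]
    · have h1 : IccProd h (a - ((n + 1 : ℕ) : ℤ)) b = 1 :=
        IccProd_eq_one h fun j _ hj => hv j (by omega)
      have h2 : IccProd h a b = 1 := IccProd_empty h (by omega)
      rw [h1, h2]

lemma IccProd_telescope (u F : ℤ → A) {a b : ℤ} (hab : a ≤ b) :
    IccProd (fun j => u (j - 1) * F j * (u j)⁻¹) a b
      = u (a - 1) * IccProd F a b * (u b)⁻¹ := by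
  obtain ⟨n, rfl⟩ : ∃ n : ℕ, b = a + n := ⟨(b - a).toNat, by omega⟩
  induction n with
  | zero => simp [IccProd_self]
  | succ n ih =>
    have e : a + ((n : ℕ) + 1 : ℕ) = (a + n) + 1 := by push_cast; ring
    rw [e, IccProd_succ_right _ (by omega), IccProd_succ_right F (by omega),
      ih (by omega)]
    group

section Group

variable {B : Type*} [Group B]

lemma bound_of_finite {S : Set ℤ} (hS : S.Finite) : ∃ N : ℕ, ∀ j ∈ S, |j| ≤ N := by
  refine ⟨hS.toFinset.sup fun j => j.natAbs, fun j hj => ?_⟩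
  have := Finset.le_sup (f := fun j : ℤ => j.natAbs) ((Set.Finite.mem_toFinset hS).2 hj)
  rw [Int.abs_eq_natAbs]
  exact_mod_cast this

lemma orbit_bound (f : B → A) (hf : (Function.mulSupport f).Finite) (b : B)
    (hbinj : Function.Injective fun j : ℤ => b ^ j) (u : B) :
    ∃ N : ℕ, ∀ j : ℤ, (N : ℤ) < |j| → f (u * b ^ j) = 1 := by
  have hinj : Function.Injective fun j : ℤ => u * b ^ j := fun i j hij =>
    hbinj (mul_left_cancel hij)
  have hfin : ((fun j : ℤ => u * b ^ j) ⁻¹' Function.mulSupport f).Finite :=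
    Set.Finite.preimage hinj.injOn hf
  obtain ⟨N, hN⟩ := bound_of_finite hfin
  refine ⟨N, fun j hj => ?_⟩
  by_contra hne
  exact absurd (hN j hne) (by omega)

/-- If all window products of `f` along the `b`-orbit based at support points are trivial,
then every full finite interval product along any `b`-orbit is trivial. -/
lemma key (f : B → A) (b : B) (hbinj : Function.Injective fun j : ℤ => b ^ j)
    (H : ∀ t ∈ Function.mulSupport f, ∀ N : ℕ,
      (∀ j : ℤ, (N : ℤ) < |j| → f (t * b ^ j) = 1) →
      windowProd (fun j => f (t * b ^ j)) N = 1)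
    (u : B) (a b' : ℤ)
    (hv : ∀ j : ℤ, j < a ∨ b' < j → f (u * b ^ j) = 1) :
    IccProd (fun j => f (u * b ^ j)) a b' = 1 := by
  by_cases hex : ∃ j : ℤ, f (u * b ^ j) ≠ 1
  · obtain ⟨j0, hj0⟩ := hex
    have horb : ∀ j : ℤ, u * b ^ j = (u * b ^ j0) * b ^ (j - j0) := by
      intro j
      rw [mul_assoc, ← zpow_add]
      congr 2
      omega
    have ht : u * b ^ j0 ∈ Function.mulSupport f := hj0
    have ha : a ≤ j0 := by
      by_contra hc
      exact hj0 (hv j0 (Or.inl (by omega)))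
    have hb' : j0 ≤ b' := by
      by_contra hc
      exact hj0 (hv j0 (Or.inr (by omega)))
    set ψ : ℤ → A := fun j => f ((u * b ^ j0) * b ^ j) with hψ
    have e : ∀ j : ℤ, f (u * b ^ j) = ψ (j + -j0) := by
      intro j
      show f (u * b ^ j) = f (u * b ^ j0 * b ^ (j + -j0))
      have e' : u * b ^ j0 * b ^ (j + -j0) = u * b ^ j := by
        rw [mul_assoc, ← zpow_add, show j0 + (j + -j0) = j by omega]
      rw [e']
    have e1 : IccProd (fun j => f (u * b ^ j)) a b' = IccProd ψ (a - j0) (b' - j0) := by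
      rw [IccProd_congr e, IccProd_shift ψ (-j0) a b',
        show a + -j0 = a - j0 by ring, show b' + -j0 = b' - j0 by ring]
    have hψv : ∀ j : ℤ, j < a - j0 ∨ b' - j0 < j → ψ j = 1 := by
      intro j hj
      show f (u * b ^ j0 * b ^ j) = 1
      have e' : u * b ^ j0 * b ^ j = u * b ^ (j + j0) := by
        rw [mul_assoc, ← zpow_add, show j0 + j = j + j0 by omega]
      rw [e']
      exact hv (j + j0) (by omega)
    set N : ℕ := (max (-(a - j0)) (b' - j0)).toNat with hN
    have hNa : -(N : ℤ) ≤ a - j0 := by omega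
    have hNb : b' - j0 ≤ (N : ℤ) := by omega
    have e2 : IccProd ψ (a - j0) (b' - j0) = IccProd ψ (-(N : ℤ)) (N : ℤ) := by
      rw [IccProd_ext_left ψ hNa fun j hj => hψv j (Or.inl hj),
        IccProd_ext_right ψ hNb fun j hj => hψv j (Or.inr hj)]
    rw [e1, e2, ← windowProd_eq]
    exact H _ ht N fun j hj => hψv j (by rw [abs_gt_iff] at hj; omega)
  · push_neg at hex
    exact IccProd_eq_one _ fun j _ _ => hex j

end Group

end WPi


/-- Let `x = (b,f)` and `y = (c,g)` in `A ≀ B` with `b` conjugate to `c` in `B`, `b` of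
infinite order, and suppose `π_{t,b}(f) = 1` for all `t ∈ supp f` (expressed through
sufficiently large windows of the infinite product `π_{t,b}(f) = ∏_{j∈ℤ} f (t b^j)`).
Then `x` is conjugate to `y` iff `π_{s,c}(g) = 1` for all `s ∈ supp g`. -/
theorem wreath_conj_iff_trivial_pi {A B : Type*} [Group A] [Group B]
    (x y : Wreath A B) (hb : ¬ IsOfFinOrder x.b) (hbc : IsConj x.b y.b)
    (hf : ∀ t ∈ Function.mulSupport x.f, ∀ N : ℕ,
      (∀ j : ℤ, (N : ℤ) < |j| → x.f (t * x.b ^ j) = 1) →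
      windowProd (fun j => x.f (t * x.b ^ j)) N = 1) :
    IsConj x y ↔ ∀ s ∈ Function.mulSupport y.f, ∀ N : ℕ,
      (∀ j : ℤ, (N : ℤ) < |j| → y.f (s * y.b ^ j) = 1) →
      windowProd (fun j => y.f (s * y.b ^ j)) N = 1 := by
  classical
  obtain ⟨d, hd⟩ := isConj_iff.1 hbc
  have hbinj : Function.Injective fun j : ℤ => x.b ^ j :=
    injective_zpow_iff_not_isOfFinOrder.2 hb
  have hybconj : ∀ j : ℤ, y.b ^ j = d * x.b ^ j * d⁻¹ := by
    intro j; rw [← hd, conj_zpow]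
  have hcb : ¬ IsOfFinOrder y.b := by
    intro hfin
    apply hb
    rw [isOfFinOrder_iff_pow_eq_one] at hfin ⊢
    obtain ⟨n, hn, h1⟩ := hfin
    refine ⟨n, hn, ?_⟩
    rw [← hd, conj_pow] at h1
    have h2 := congrArg (fun w => d⁻¹ * w * d) h1
    simpa [mul_assoc] using h2
  have hcinj : Function.Injective fun j : ℤ => y.b ^ j :=
    injective_zpow_iff_not_isOfFinOrder.2 hcb
  constructor
  · -- Forward direction
    intro hxy s hs N hN
    obtain ⟨z, hz⟩ := isConj_iff.1 hxy
    have hby : y.b = z.b * x.b * z.b⁻¹ := by rw [← hz]; simp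
    have hybz : ∀ j : ℤ, y.b ^ j = z.b * x.b ^ j * z.b⁻¹ := by
      intro j; rw [hby, conj_zpow]
    have hgf : ∀ t : B, y.f t
        = z.f (t * z.b * x.b⁻¹) * x.f (t * z.b) * (z.f (t * z.b))⁻¹ := by
      intro t
      rw [← hz]
      simp [mul_assoc]
    have hGtel : ∀ j : ℤ, y.f (s * y.b ^ j)
        = z.f (s * z.b * x.b ^ (j - 1)) * x.f (s * z.b * x.b ^ j)
          * (z.f (s * z.b * x.b ^ j))⁻¹ := by
      intro j
      rw [hgf]
      have e1 : s * y.b ^ j * z.b = s * z.b * x.b ^ j := by rw [hybz]; group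
      have e2 : s * z.b * x.b ^ j * x.b⁻¹ = s * z.b * x.b ^ (j - 1) := by group
      rw [e1, e2]
    obtain ⟨N1, hN1⟩ := WPi.orbit_bound z.f z.fin x.b hbinj (s * z.b)
    obtain ⟨N2, hN2⟩ := WPi.orbit_bound x.f x.fin x.b hbinj (s * z.b)
    set M : ℕ := N + N1 + N2 + 1 with hM
    have hU1 : z.f (s * z.b * x.b ^ (-(M : ℤ) - 1)) = 1 :=
      hN1 _ (by rw [WPi.abs_gt_iff]; omega)
    have hU2 : z.f (s * z.b * x.b ^ (M : ℤ)) = 1 :=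
      hN1 _ (by rw [WPi.abs_gt_iff]; omega)
    have hF1 : WPi.IccProd (fun j => x.f (s * z.b * x.b ^ j)) (-(M : ℤ)) (M : ℤ) = 1 :=
      WPi.key x.f x.b hbinj hf (s * z.b) _ _
        (fun j hj => hN2 j (by rw [WPi.abs_gt_iff]; omega))
    have e3 : WPi.IccProd (fun j => y.f (s * y.b ^ j)) (-(M : ℤ)) (M : ℤ)
        = WPi.IccProd (fun j => y.f (s * y.b ^ j)) (-(N : ℤ)) (N : ℤ) := by
      rw [WPi.IccProd_ext_right (fun j => y.f (s * y.b ^ j)) (b := (N : ℤ))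
          (b' := (M : ℤ)) (by omega)
          (fun j hj => hN j (by rw [WPi.abs_gt_iff]; omega)),
        WPi.IccProd_ext_left (fun j => y.f (s * y.b ^ j)) (a' := -(M : ℤ))
          (a := -(N : ℤ)) (by omega)
          (fun j hj => hN j (by rw [WPi.abs_gt_iff]; omega))]
    rw [WPi.windowProd_eq]
    calc WPi.IccProd (fun j => y.f (s * y.b ^ j)) (-(N : ℤ)) (N : ℤ)
        = WPi.IccProd (fun j => y.f (s * y.b ^ j)) (-(M : ℤ)) (M : ℤ) := e3.symm
      _ = WPi.IccProd (fun j => z.f (s * z.b * x.b ^ (j - 1)) * x.f (s * z.b * x.b ^ j)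
            * (z.f (s * z.b * x.b ^ j))⁻¹) (-(M : ℤ)) (M : ℤ) :=
          WPi.IccProd_congr hGtel _ _
      _ = z.f (s * z.b * x.b ^ (-(M : ℤ) - 1))
            * WPi.IccProd (fun j => x.f (s * z.b * x.b ^ j)) (-(M : ℤ)) (M : ℤ)
            * (z.f (s * z.b * x.b ^ (M : ℤ)))⁻¹ :=
          WPi.IccProd_telescope (fun i => z.f (s * z.b * x.b ^ i))
            (fun i => x.f (s * z.b * x.b ^ i)) (by omega)
      _ = 1 := by rw [hU1, hU2, hF1]; simp
  · -- Backward direction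
    intro Hg
    rw [isConj_iff]
    have keyg : ∀ (u : B) (a b' : ℤ),
        (∀ j : ℤ, j < a ∨ b' < j → y.f (u * y.b ^ j) = 1) →
        WPi.IccProd (fun j => y.f (u * y.b ^ j)) a b' = 1 :=
      fun u a b' hv => WPi.key y.f y.b hcinj Hg u a b' hv
    have hex : ∀ u : B, ∃ N : ℕ, ∀ j : ℤ, (N : ℤ) < |j| →
        x.f (u * x.b ^ j) = 1 ∧ y.f (u * x.b ^ j * d⁻¹) = 1 := by
      intro u
      obtain ⟨N1, h1⟩ := WPi.orbit_bound x.f x.fin x.b hbinj u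
      obtain ⟨N2, h2⟩ := WPi.orbit_bound (fun v => y.f (v * d⁻¹))
        (Wreath.fin_shift y.fin d⁻¹) x.b hbinj u
      refine ⟨max N1 N2, fun j hj => ⟨h1 j ?_, h2 j ?_⟩⟩ <;>
        (rw [WPi.abs_gt_iff] at hj ⊢; push_cast at hj; omega)
    choose Bd hBd using hex
    set h : B → A := fun u =>
      (WPi.IccProd (fun j => y.f (u * x.b ^ j * d⁻¹)) (-(Bd u : ℤ)) 0)⁻¹ *
        WPi.IccProd (fun j => x.f (u * x.b ^ j)) (-(Bd u : ℤ)) 0 with hhdef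
    have hstab : ∀ (u : B) (N : ℕ), Bd u ≤ N →
        h u = (WPi.IccProd (fun j => y.f (u * x.b ^ j * d⁻¹)) (-(N : ℤ)) 0)⁻¹ *
          WPi.IccProd (fun j => x.f (u * x.b ^ j)) (-(N : ℤ)) 0 := by
      intro u N hNu
      rw [hhdef]
      simp only
      rw [WPi.IccProd_ext_left (fun j => y.f (u * x.b ^ j * d⁻¹))
            (a' := -(N : ℤ)) (a := -(Bd u : ℤ)) (b := 0) (by omega)
            (fun j hj => (hBd u j (by rw [WPi.abs_gt_iff]; omega)).2),
          WPi.IccProd_ext_left (fun j => x.f (u * x.b ^ j))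
            (a' := -(N : ℤ)) (a := -(Bd u : ℤ)) (b := 0) (by omega)
            (fun j hj => (hBd u j (by rw [WPi.abs_gt_iff]; omega)).1)]
    set W : Set B := Function.mulSupport x.f
        ∪ (fun s => s * d) '' Function.mulSupport y.f with hWdef
    have hWfin : W.Finite := x.fin.union (y.fin.image _)
    have hfact1 : ∀ u : B, h u ≠ 1 → ∃ i : ℤ, i ≤ 0 ∧ u * x.b ^ i ∈ W := by
      intro u hu
      by_cases hG : WPi.IccProd (fun j => y.f (u * x.b ^ j * d⁻¹)) (-(Bd u : ℤ)) 0 = 1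
      · by_cases hF : WPi.IccProd (fun j => x.f (u * x.b ^ j)) (-(Bd u : ℤ)) 0 = 1
        · exact absurd (by rw [hhdef]; simp only; rw [hG, hF]; simp) hu
        · obtain ⟨i, hi1, hi2, hi3⟩ := WPi.exists_ne_one_of_IccProd_ne_one hF
          exact ⟨i, hi2, by rw [hWdef]; exact Set.mem_union_left _ hi3⟩
      · obtain ⟨i, hi1, hi2, hi3⟩ := WPi.exists_ne_one_of_IccProd_ne_one hG
        refine ⟨i, hi2, ?_⟩
        rw [hWdef]
        exact Set.mem_union_right _ ⟨u * x.b ^ i * d⁻¹, hi3, by group⟩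
    have hfact2 : ∀ u : B, h u ≠ 1 → ∃ j : ℤ, 1 ≤ j ∧ u * x.b ^ j ∈ W := by
      intro u hu
      by_contra hc
      push_neg at hc
      apply hu
      rw [hhdef]
      simp only
      have hFv : ∀ j : ℤ, j < -(Bd u : ℤ) ∨ 0 < j → x.f (u * x.b ^ j) = 1 := by
        intro j hj
        rcases hj with hj | hj
        · exact (hBd u j (by rw [WPi.abs_gt_iff]; omega)).1
        · by_contra hne
          exact absurd (by rw [hWdef]; exact Set.mem_union_left _ hne) (hc j (by omega))
      have hGv : ∀ j : ℤ, j < -(Bd u : ℤ) ∨ 0 < j → y.f (u * x.b ^ j * d⁻¹) = 1 := by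
        intro j hj
        rcases hj with hj | hj
        · exact (hBd u j (by rw [WPi.abs_gt_iff]; omega)).2
        · by_contra hne
          refine absurd ?_ (hc j (by omega))
          rw [hWdef]
          exact Set.mem_union_right _ ⟨u * x.b ^ j * d⁻¹, hne, by group⟩
      have h1 : WPi.IccProd (fun j => x.f (u * x.b ^ j)) (-(Bd u : ℤ)) 0 = 1 :=
        WPi.key x.f x.b hbinj hf u _ _ hFv
      have h2 : WPi.IccProd (fun j => y.f (u * x.b ^ j * d⁻¹)) (-(Bd u : ℤ)) 0 = 1 := by
        have e : ∀ j : ℤ, y.f (u * x.b ^ j * d⁻¹) = y.f ((u * d⁻¹) * y.b ^ j) := by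
          intro j
          congr 1
          rw [hybconj j]
          group
        rw [WPi.IccProd_congr e]
        refine keyg (u * d⁻¹) _ _ fun j hj => ?_
        rw [← e j]
        exact hGv j hj
      rw [h1, h2]
      simp
    have hKfin : {k : ℤ | ∃ v ∈ W, ∃ w ∈ W, v * x.b ^ k = w}.Finite := by
      have hsub : {k : ℤ | ∃ v ∈ W, ∃ w ∈ W, v * x.b ^ k = w} ⊆
          ⋃ v ∈ W, ⋃ w ∈ W, {k : ℤ | v * x.b ^ k = w} := by
        rintro k ⟨v, hv, w, hw, hk⟩
        exact Set.mem_biUnion hv (Set.mem_biUnion hw hk)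
      refine Set.Finite.subset ?_ hsub
      refine hWfin.biUnion fun v _ => hWfin.biUnion fun w _ => ?_
      refine Set.Subsingleton.finite fun k1 h1 k2 h2 => ?_
      exact hbinj (mul_left_cancel (h1.trans h2.symm))
    obtain ⟨K, hK⟩ := WPi.bound_of_finite hKfin
    have hhfin : (Function.mulSupport h).Finite := by
      refine Set.Finite.subset ((hWfin.prod (Set.finite_Icc (1 : ℤ) (K : ℤ))).image
        fun p : B × ℤ => p.1 * x.b ^ (-p.2)) ?_
      intro u hu
      obtain ⟨i, hi0, hiW⟩ := hfact1 u hu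
      obtain ⟨j, hj1, hjW⟩ := hfact2 u hu
      have hk : |j - i| ≤ (K : ℤ) := hK _ ⟨u * x.b ^ i, hiW, u * x.b ^ j, hjW, by group⟩
      rw [Int.abs_eq_natAbs] at hk
      refine ⟨(u * x.b ^ j, j), ⟨hjW, Set.mem_Icc.2 ⟨hj1, by omega⟩⟩, by simp only; group⟩
    refine ⟨⟨d, h, hhfin⟩, ?_⟩
    refine Wreath.ext' hd ?_
    funext t
    simp only [Wreath.mul_f, Wreath.inv_f, Wreath.inv_b, Wreath.mul_b, inv_inv]
    show h (t * d * x.b⁻¹) * x.f (t * d) * (h (t * d))⁻¹ = y.f t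
    set m : ℕ := max (Bd (t * d)) (Bd (t * d * x.b⁻¹)) with hm
    have e1 := hstab (t * d) (m + 1) (by omega)
    have e2 := hstab (t * d * x.b⁻¹) m (by omega)
    have hshift : ∀ φ : B → A,
        WPi.IccProd (fun j => φ (t * d * x.b⁻¹ * x.b ^ j)) (-(m : ℤ)) 0
          = WPi.IccProd (fun j => φ (t * d * x.b ^ j)) (-((m : ℤ) + 1)) (-1) := by
      intro φ
      have e : ∀ j : ℤ, φ (t * d * x.b⁻¹ * x.b ^ j)
          = φ (t * d * x.b ^ (j + (-1 : ℤ))) := by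
        intro j
        congr 1
        group
      have s1 : WPi.IccProd (fun j => φ (t * d * x.b⁻¹ * x.b ^ j)) (-(m : ℤ)) 0
          = WPi.IccProd (fun j' => φ (t * d * x.b ^ j')) (-(m : ℤ) + -1) (0 + -1) := by
        rw [WPi.IccProd_congr e]
        exact WPi.IccProd_shift (fun j' => φ (t * d * x.b ^ j')) (-1) (-(m : ℤ)) 0
      rw [s1, show -(m : ℤ) + -1 = -((m : ℤ) + 1) by ring, show (0 : ℤ) + -1 = (-1 : ℤ) by ring]
    have hsplit : ∀ φ : B → A,
        WPi.IccProd (fun j => φ (t * d * x.b ^ j)) (-((m : ℤ) + 1)) 0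
          = WPi.IccProd (fun j => φ (t * d * x.b ^ j)) (-((m : ℤ) + 1)) (-1)
            * φ (t * d * x.b ^ (0 : ℤ)) := by
      intro φ
      have e := WPi.IccProd_succ_right (fun j => φ (t * d * x.b ^ j))
        (a := -((m : ℤ) + 1)) (b := -1) (by omega)
      rw [show (-1 : ℤ) + 1 = 0 by ring] at e
      exact e
    have ecast : ((m + 1 : ℕ) : ℤ) = (m : ℤ) + 1 := by push_cast; ring
    rw [ecast] at e1
    rw [e1, e2, hshift (fun v => y.f (v * d⁻¹)), hshift x.f,
      hsplit (fun v => y.f (v * d⁻¹)), hsplit x.f]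
    have e4 : x.f (t * d) = x.f (t * d * x.b ^ (0 : ℤ)) := by
      congr 1
      group
    have e5 : t * d * x.b ^ (0 : ℤ) * d⁻¹ = t := by group
    rw [e4, ← e5]
    group
end

section
/- In the Lamplighter group ℤ₂ ≀ ℤ, viewing finitely supported functions ℤ → ℤ₂ as finite subsets of ℤ, two elements (1, F) and (1, G) (with shift component 1) are conjugate whenever |F| ≡ |G| (mod 2). -/
/-- The Lamplighter group `ℤ₂ ≀ ℤ = ℤ ⋉ ℤ₂^(ℤ)`: a finitely supported function
`ℤ → ℤ₂` is identified with its support, a finite subset of `ℤ`; elements are pairs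
`(b, F)` with `b ∈ ℤ` a shift and `F ⊆ ℤ` finite, multiplied by
`(b,F)(c,G) = (b+c, (F+c) △ G)`. -/
structure Lamplighter where
  s : ℤ
  F : Finset ℤ

namespace Lamplighter

theorem ext' {x y : Lamplighter} (h1 : x.s = y.s) (h2 : x.F = y.F) : x = y := by
  cases x; cases y; cases h1; cases h2; rfl

instance : One Lamplighter := ⟨⟨0, ∅⟩⟩
instance : Mul Lamplighter := ⟨fun x y => ⟨x.s + y.s, symmDiff (x.F.image (· + y.s)) y.F⟩⟩
instance : Inv Lamplighter := ⟨fun x => ⟨-x.s, x.F.image (· + -x.s)⟩⟩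

@[simp] lemma mul_s (x y : Lamplighter) : (x * y).s = x.s + y.s := rfl
@[simp] lemma mul_F (x y : Lamplighter) :
    (x * y).F = symmDiff (x.F.image (· + y.s)) y.F := rfl
@[simp] lemma one_s : (1 : Lamplighter).s = 0 := rfl
@[simp] lemma one_F : (1 : Lamplighter).F = ∅ := rfl
@[simp] lemma inv_s (x : Lamplighter) : (x⁻¹).s = -x.s := rfl
@[simp] lemma inv_F (x : Lamplighter) : (x⁻¹).F = x.F.image (· + -x.s) := rfl

instance : Group Lamplighter where
  mul_assoc x y z := by
    apply ext'
    · simp [add_assoc]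
    · show symmDiff ((symmDiff (x.F.image (· + y.s)) y.F).image (· + z.s)) z.F
        = symmDiff (x.F.image (· + (y.s + z.s))) (symmDiff (y.F.image (· + z.s)) z.F)
      rw [Finset.image_symmDiff _ _ (add_left_injective _), Finset.image_image,
        symmDiff_assoc]
      have hc : ((· + z.s) ∘ (· + y.s)) = (fun w : ℤ => w + (y.s + z.s)) := by
        funext w; simp [add_assoc]
      rw [hc]
  one_mul x := by
    apply ext'
    · simp
    · show symmDiff ((∅ : Finset ℤ).image (· + x.s)) x.F = x.F
      simp
  mul_one x := by
    apply ext'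
    · simp
    · show symmDiff (x.F.image (· + (0 : ℤ))) ∅ = x.F
      simp [Finset.image_id']
  inv_mul_cancel x := by
    apply ext'
    · simp
    · show symmDiff ((x.F.image (· + -x.s)).image (· + x.s)) x.F = ∅
      rw [Finset.image_image]
      have hc : ((· + x.s) ∘ (· + -x.s)) = (id : ℤ → ℤ) := by funext w; simp
      rw [hc, Finset.image_id, symmDiff_self, Finset.bot_eq_empty]

end Lamplighter

/-! Conjugating `(1, F)` by a pure lamp configuration `(0, H)` yields `(1, F △ ((H + 1) △ H))`.
The map `H ↦ (H + 1) △ H` is additive for `△` and sends the interval `[a, b)` to `{a} △ {b}`,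
so every finite set of even cardinality, in particular `F △ G`, lies in its image. -/

open Finset
open scoped symmDiff

lemma Finset.card_symmDiff_add_two_mul_card_inter {α : Type*} [DecidableEq α] (s t : Finset α) :
    #(s ∆ t) + 2 * #(s ∩ t) = #s + #t := by
  rw [Finset.symmDiff_def, card_union_of_disjoint disjoint_sdiff_sdiff]
  have := card_sdiff_add_card_inter s t
  have := card_sdiff_add_card_inter t s
  rw [inter_comm t s] at this
  omega

namespace Lamplighter

def shiftSymmDiff (H : Finset ℤ) : Finset ℤ := H.image (· + 1) ∆ H

lemma shiftSymmDiff_symmDiff (H K : Finset ℤ) :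
    shiftSymmDiff (H ∆ K) = shiftSymmDiff H ∆ shiftSymmDiff K := by
  rw [shiftSymmDiff, shiftSymmDiff, shiftSymmDiff, image_symmDiff _ _ (add_left_injective 1),
    symmDiff_symmDiff_symmDiff_comm]

lemma shiftSymmDiff_Ico_min_max (a b : ℤ) :
    shiftSymmDiff (Ico (min a b) (max a b)) = {a} ∆ {b} := by
  ext x
  simp only [shiftSymmDiff, image_add_right_Ico, mem_symmDiff, mem_Ico, mem_singleton]
  omega

lemma exists_shiftSymmDiff_eq (S : Finset ℤ) (hS : Even #S) : ∃ H, shiftSymmDiff H = S := by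
  induction S using Finset.strongInduction with
  | H S ih =>
  rcases S.eq_empty_or_nonempty with rfl | ⟨a, ha⟩
  · exact ⟨∅, rfl⟩
  obtain ⟨k, hk⟩ := hS
  obtain ⟨b, hb⟩ : (S.erase a).Nonempty := by
    have := card_erase_add_one ha
    rw [← card_pos]
    omega
  have hT : Even #((S.erase a).erase b) := by
    have := card_erase_add_one hb
    have := card_erase_add_one ha
    exact ⟨k - 1, by omega⟩
  obtain ⟨H, hH⟩ := ih _ ((erase_ssubset hb).trans (erase_ssubset ha)) hT
  refine ⟨H ∆ Ico (min a b) (max a b), ?_⟩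
  rw [shiftSymmDiff_symmDiff, hH, shiftSymmDiff_Ico_min_max]
  ext x
  simp only [mem_symmDiff, mem_singleton, mem_erase]
  have hba : b ≠ a := ne_of_mem_erase hb
  have hbS : b ∈ S := mem_of_mem_erase hb
  by_cases hxa : x = a <;> by_cases hxb : x = b <;> simp_all

lemma conj_mk_one (H F : Finset ℤ) :
    (⟨0, H⟩ : Lamplighter) * ⟨1, F⟩ * (⟨0, H⟩ : Lamplighter)⁻¹ = ⟨1, F ∆ shiftSymmDiff H⟩ := by
  apply ext'
  · simp
  · simp only [mul_F, inv_F, inv_s, neg_zero, add_zero, image_id', shiftSymmDiff]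
    rw [symmDiff_right_comm, symmDiff_comm]

end Lamplighter

/-- In the Lamplighter group `ℤ₂ ≀ ℤ`, two elements `(1, F)` and `(1, G)` (with shift
component `1`) are conjugate whenever `|F| ≡ |G| (mod 2)`. -/
theorem lamplighter_shift_one_conj (F G : Finset ℤ) (h : F.card % 2 = G.card % 2) :
    IsConj (⟨1, F⟩ : Lamplighter) ⟨1, G⟩ := by
  have hFG : Even #(F ∆ G) := by
    have := card_symmDiff_add_two_mul_card_inter F G
    rw [Nat.even_iff]
    omega
  obtain ⟨H, hH⟩ := Lamplighter.exists_shiftSymmDiff_eq _ hFG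
  refine isConj_iff.2 ⟨⟨0, H⟩, ?_⟩
  rw [Lamplighter.conj_mk_one, hH, symmDiff_symmDiff_cancel_left]
end

section
/- In the Lamplighter group ℤ₂ ≀ ℤ, two elements (0, F) and (0, G) with trivial shift component are conjugate if, and only if, there exists x ∈ ℤ with F = G + x (i.e., F is a translate of G). -/
lemma lamplighter_conj_calc (c : Lamplighter) (F : Finset ℤ) :
    c * ⟨0, F⟩ * c⁻¹ = (⟨0, F.image (· + -c.s)⟩ : Lamplighter) := by
  apply Lamplighter.ext'
  · simp
  · show symmDiff ((symmDiff (c.F.image (· + (0:ℤ))) F).image (· + -c.s))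
      (c.F.image (· + -c.s)) = F.image (· + -c.s)
    rw [show ((· + (0:ℤ)) : ℤ → ℤ) = id by funext w; simp, Finset.image_id,
      Finset.image_symmDiff _ _ (add_left_injective _), symmDiff_comm,
      ← symmDiff_assoc, symmDiff_self, bot_symmDiff]

/-- In the Lamplighter group `ℤ₂ ≀ ℤ`, two elements `(0, F)` and `(0, G)` with trivial
shift component are conjugate iff `F` is a translate of `G`. -/
theorem lamplighter_shift_zero_conj (F G : Finset ℤ) :
    IsConj (⟨0, F⟩ : Lamplighter) ⟨0, G⟩ ↔ ∃ x : ℤ, F = G.image (· + x) := by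
  rw [isConj_iff]
  constructor
  · rintro ⟨c, hc⟩
    rw [lamplighter_conj_calc] at hc
    refine ⟨c.s, ?_⟩
    have hG : G = F.image (· + -c.s) := (congrArg Lamplighter.F hc).symm
    rw [hG, Finset.image_image]
    have : ((· + c.s) ∘ (· + -c.s)) = (id : ℤ → ℤ) := by funext w; simp
    rw [this, Finset.image_id]
  · rintro ⟨x, hx⟩
    refine ⟨⟨x, ∅⟩, ?_⟩
    rw [lamplighter_conj_calc]
    refine Lamplighter.ext' rfl ?_
    show F.image (· + -x) = G
    rw [hx, Finset.image_image]
    have : ((· + -x) ∘ (· + x)) = (id : ℤ → ℤ) := by funext w; simp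
    rw [this, Finset.image_id]
end

section
/- Let β ∈ ℕ and suppose every torsion element of A has β-smooth order and every torsion element of B has β-smooth order. Then every torsion element of the restricted wreath product A ≀ B has β-smooth order. -/
namespace Wreath

variable {A B : Type*} [Group A] [Group B]

lemma pow_b (x : Wreath A B) (n : ℕ) : (x ^ n).b = x.b ^ n := by
  induction n with
  | zero => rw [pow_zero, pow_zero]; rfl
  | succ n ih => rw [pow_succ, pow_succ, mul_b, ih]

lemma pow_f_of_b_eq_one {y : Wreath A B} (h : y.b = 1) (n : ℕ) (z : B) :
    (y ^ n).f z = (y.f z) ^ n := by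
  induction n with
  | zero => rw [pow_zero, pow_zero]; rfl
  | succ n ih => rw [pow_succ, mul_f, h, inv_one, mul_one, ih, pow_succ]

end Wreath

/-- If every torsion element of `A` has β-smooth order and every torsion element of `B`
has β-smooth order, then every torsion element of the restricted wreath product `A ≀ B`
has β-smooth order (a natural number is β-smooth if all its prime factors are `≤ β`). -/
theorem wreath_torsion_smooth {A B : Type*} [Group A] [Group B] (β : ℕ)
    (hA : ∀ a : A, IsOfFinOrder a → ∀ p : ℕ, p.Prime → p ∣ orderOf a → p ≤ β)
    (hB : ∀ b : B, IsOfFinOrder b → ∀ p : ℕ, p.Prime → p ∣ orderOf b → p ≤ β) :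
    ∀ x : Wreath A B, IsOfFinOrder x → ∀ p : ℕ, p.Prime → p ∣ orderOf x → p ≤ β := by
  intro x hx p hp hpN
  have hNpos : 0 < orderOf x := hx.orderOf_pos
  have hbN : x.b ^ orderOf x = 1 := by
    rw [← Wreath.pow_b, pow_orderOf_eq_one]; rfl
  have hbfin : IsOfFinOrder x.b := isOfFinOrder_iff_pow_eq_one.mpr ⟨orderOf x, hNpos, hbN⟩ 
  by_cases hpm : p ∣ orderOf x.b
  · exact hB x.b hbfin p hp hpm
  · set m := orderOf x.b with hm
    set y := x ^ m with hy
    have hyfin : IsOfFinOrder y := hx.pow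
    set M := orderOf y with hM
    have hMpos : 0 < M := hyfin.orderOf_pos
    -- p ∣ M
    have hdvd : orderOf x ∣ m * M := by
      apply orderOf_dvd_of_pow_eq_one
      rw [pow_mul, ← hy, pow_orderOf_eq_one]
    have hpM : p ∣ M :=
      (hp.coprime_iff_not_dvd.mpr hpm).dvd_of_dvd_mul_left (hpN.trans hdvd)
    have hyb : y.b = 1 := by rw [hy, Wreath.pow_b]; exact pow_orderOf_eq_one x.b
    -- each coordinate is torsion
    have hcoord : ∀ z : B, (y.f z) ^ M = 1 := by
      intro z
      rw [← Wreath.pow_f_of_b_eq_one hyb, hM, pow_orderOf_eq_one, Wreath.one_f]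
    -- some coordinate has order divisible by p
    have hex : ∃ z : B, p ∣ orderOf (y.f z) := by
      by_contra h
      push_neg at h
      have : y ^ (M / p) = 1 := by
        apply Wreath.ext'
        · rw [Wreath.pow_b, hyb, one_pow, Wreath.one_b]
        · funext z
          rw [Wreath.pow_f_of_b_eq_one hyb, Wreath.one_f]
          have hd : orderOf (y.f z) ∣ M := orderOf_dvd_of_pow_eq_one (hcoord z)
          have hMp : M / p * p = M := Nat.div_mul_cancel hpM
          have : orderOf (y.f z) ∣ M / p := by
            exact Nat.Coprime.dvd_of_dvd_mul_right (n := p)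
              ((hp.coprime_iff_not_dvd.mpr (h z)).symm) (by rw [hMp]; exact hd)
          exact orderOf_dvd_iff_pow_eq_one.mp this
      have hle : M ≤ M / p := Nat.le_of_dvd (Nat.lt_of_lt_of_le Nat.zero_lt_one
        (Nat.one_le_div_iff hp.pos |>.mpr (Nat.le_of_dvd hMpos hpM)))
        (orderOf_dvd_of_pow_eq_one this)
      exact absurd hle (Nat.not_le.mpr (Nat.div_lt_self hMpos hp.one_lt))
    obtain ⟨z, hz⟩ := hex
    have : IsOfFinOrder (y.f z) :=
      isOfFinOrder_iff_pow_eq_one.mpr ⟨M, hMpos, hcoord z⟩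
    exact hA (y.f z) this p hp hz
end

section
/- Let b, t ∈ B, let e₁ < ⋯ < e_n be integers, a₁, …, a_n ∈ A, and let f ∈ A^(B) satisfy f(t b^{e_i}) = a_i and f(c) = 1 for c ∉ {t b^{e_1}, …, t b^{e_n}}. Assume b has infinite order. Then for any k > 0 and any ℓ ∈ ℤ, f^{(b,k)}(t b^ℓ) = a_i a_{i+1} ⋯ a_{j-1}, where 1 ≤ i ≤ j ≤ n+1 are such that max{e_{j-1}, e_{i-1}+k} ≤ ℓ ≤ min{e_i + k - 1, e_j - 1}, with the conventions e₀ = -∞ and e_{n+1} = +∞ (empty products being the identity). -/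
private lemma pow_function_evaluation_aux {A B : Type*} [Group A] [Group B]
    (b t : B) (hb : ¬ IsOfFinOrder b) (n : ℕ) (e : ℕ → ℤ) (a : ℕ → A) (f : B → A)
    (hmono : ∀ i j : ℕ, 1 ≤ i → i < j → j ≤ n → e i < e j)
    (hval : ∀ i : ℕ, 1 ≤ i → i ≤ n → f (t * b ^ e i) = a i)
    (hoff : ∀ c : B, (∀ i : ℕ, 1 ≤ i → i ≤ n → c ≠ t * b ^ e i) → f c = 1)
    (k : ℕ) :
    ∀ (ℓ : ℤ) (i j : ℕ), 1 ≤ i → i ≤ j → j ≤ n + 1 →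
    (2 ≤ j → e (j - 1) ≤ ℓ) →
    (2 ≤ i → e (i - 1) + (k : ℤ) ≤ ℓ) →
    (i ≤ n → ℓ ≤ e i + (k : ℤ) - 1) →
    (j ≤ n → ℓ ≤ e j - 1) →
    ((List.range k).map fun m => f (t * b ^ ℓ * (b ^ (k - 1 - m))⁻¹)).prod =
      ((List.range (j - i)).map fun m => a (i + m)).prod := by
  have hbinj : Function.Injective fun z : ℤ => b ^ z :=
    injective_zpow_iff_not_isOfFinOrder.mpr hb
  have hne : ∀ x y : ℤ, t * b ^ x = t * b ^ y → x = y := by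
    intro x y h
    exact hbinj (mul_left_cancel h)
  induction k with
  | zero =>
    intro ℓ i j hi hij hjn h1 h2 h3 h4
    -- product over empty range is 1; need j = i
    have hji : j = i := by
      by_contra hc
      have hlt : i < j := lt_of_le_of_ne hij (fun h => hc h.symm)
      have hjn' : j - 1 ≤ n := by omega
      have h1' : e (j - 1) ≤ ℓ := h1 (by omega)
      have h3' : ℓ ≤ e i - 1 := by
        have := h3 (by omega); omega
      have : e i ≤ e (j - 1) := by
        rcases eq_or_lt_of_le (Nat.le_sub_one_of_lt hlt) with h | h
        · rw [h]
        · exact le_of_lt (hmono i (j - 1) hi h hjn')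
      omega
    simp [hji]
  | succ k ih =>
    intro ℓ i j hi hij hjn h1 h2 h3 h4
    -- split off the last factor
    rw [List.range_succ, List.map_append, List.prod_append]
    have hlastarg : t * b ^ ℓ * (b ^ (k + 1 - 1 - k))⁻¹ = t * b ^ ℓ := by
      simp
    have hmap : ((List.range k).map fun m => f (t * b ^ ℓ * (b ^ (k + 1 - 1 - m))⁻¹)) =
        ((List.range k).map fun m => f (t * b ^ (ℓ - 1) * (b ^ (k - 1 - m))⁻¹)) := by
      apply List.map_congr_left
      intro m hm
      have hm' : m < k := List.mem_range.mp hm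
      congr 1
      have hsub : k + 1 - 1 - m = (k - 1 - m) + 1 := by omega
      rw [hsub, pow_succ]
      group
    rw [hmap]
    simp only [List.map_cons, List.map_nil, List.prod_cons, List.prod_nil, mul_one, hlastarg]
    by_cases hcase : i < j ∧ ℓ = e (j - 1)
    · obtain ⟨hlt, hℓ⟩ := hcase
      have hj1 : 1 ≤ j - 1 := by omega
      have hj1n : j - 1 ≤ n := by omega
      have hlast : f (t * b ^ ℓ) = a (j - 1) := by
        rw [hℓ]; exact hval (j - 1) hj1 hj1n
      rw [hlast]
      have hjsplit : j - i = (j - 1 - i) + 1 := by omega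
      rw [hjsplit, List.range_succ, List.map_append, List.prod_append]
      simp only [List.map_cons, List.map_nil, List.prod_cons, List.prod_nil, mul_one]
      have hidx : i + (j - 1 - i) = j - 1 := by omega
      rw [hidx]
      congr 1
      rcases Nat.eq_zero_or_pos k with hk0 | hk0
      · -- k = 0 : both sides empty; need j - 1 = i
        have hji : j - 1 = i := by
          by_contra hc
          have hlt2 : i < j - 1 := by omega
          have : e i < e (j - 1) := hmono i (j - 1) hi hlt2 hj1n
          have h3' := h3 (by omega)
          subst hk0
          push_cast at h3'
          omega
        subst hk0
        simp [hji]
      · -- apply IH with ℓ - 1, i, j - 1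
        have := ih (ℓ - 1) i (j - 1) hi (by omega) (by omega)
          (fun hji2 => by
            have : e (j - 1 - 1) < e (j - 1) :=
              hmono (j - 1 - 1) (j - 1) (by omega) (by omega) hj1n
            omega)
          (fun hi2 => by have := h2 hi2; push_cast at this ⊢; omega)
          (fun hin => by have := h3 hin; push_cast at this ⊢; omega)
          (fun hjn2 => by omega)
        exact this
    · -- last factor is 1
      have hlast : f (t * b ^ ℓ) = 1 := by
        apply hoff
        intro p hp1 hpn hceq
        have hℓp : ℓ = e p := hne ℓ (e p) hceq
        rcases lt_or_ge p i with hpi | hpi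
        · -- p ≤ i - 1
          have hi2 : 2 ≤ i := by omega
          have h2' := h2 hi2
          have : e p ≤ e (i - 1) := by
            rcases eq_or_lt_of_le (Nat.le_sub_one_of_lt hpi) with h | h
            · rw [h]
            · exact le_of_lt (hmono p (i - 1) hp1 h (by omega))
          push_cast at h2'
          omega
        · rcases lt_or_ge p j with hpj | hpj
          · -- i ≤ p ≤ j - 1
            have hlt : i < j := lt_of_le_of_lt hpi hpj
            have hnej : ℓ ≠ e (j - 1) := fun h => hcase ⟨hlt, h⟩
            have hple : e p ≤ e (j - 1) := by
              rcases eq_or_lt_of_le (Nat.le_sub_one_of_lt hpj) with h | h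
              · rw [h]
              · exact le_of_lt (hmono p (j - 1) hp1 h (by omega))
            have h1' := h1 (by omega)
            have hpeq : e p = e (j - 1) := by omega
            have : p = j - 1 := by
              by_contra hc
              have : e p < e (j - 1) := hmono p (j - 1) hp1 (by omega) (by omega)
              omega
            exact hnej (by rw [hℓp, this])
          · -- p ≥ j
            have h4' := h4 (by omega)
            have : e j ≤ e p := by
              rcases eq_or_lt_of_le hpj with h | h
              · rw [h]
              · exact le_of_lt (hmono j p (by omega) h hpn)
            omega
      rw [hlast, mul_one]
      rcases Nat.eq_zero_or_pos k with hk0 | hk0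
      · -- k = 0 : need j = i
        have hji : j = i := by
          by_contra hc
          have hlt : i < j := lt_of_le_of_ne hij (fun h => hc h.symm)
          have h1' := h1 (by omega)
          have h3' := h3 (by omega)
          subst hk0
          push_cast at h3'
          have : e i ≤ e (j - 1) := by
            rcases eq_or_lt_of_le (Nat.le_sub_one_of_lt hlt) with h | h
            · rw [h]
            · exact le_of_lt (hmono i (j - 1) hi h (by omega))
          have : ℓ = e (j - 1) := by omega
          exact hcase ⟨hlt, this⟩
        subst hk0
        simp [hji]
      · apply ih (ℓ - 1) i j hi hij hjn
        · intro hj2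
          have h1' := h1 hj2
          rcases lt_or_ge i j with hlt | hle
          · have : ℓ ≠ e (j - 1) := fun h => hcase ⟨hlt, h⟩
            omega
          · -- i = j, i ≥ 2
            have hieq : i = j := le_antisymm hij hle
            have h2' := h2 (by omega)
            push_cast at h2'
            rw [← hieq]
            omega
        · intro hi2
          have := h2 hi2; push_cast at this ⊢; omega
        · intro hin
          have := h3 hin; push_cast at this ⊢; omega
        · intro hjn2
          have := h4 hjn2; omega

/-- Let `b t : B`, let `e 1 < ⋯ < e n` be integers, `a 1, …, a n ∈ A`, and let
`f : B → A` satisfy `f (t * b ^ e i) = a i` for `1 ≤ i ≤ n` and `f c = 1` for all other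
`c`. Assume `b` has infinite order. Then for any `k > 0` and any `ℓ ∈ ℤ`,
`f^{(b,k)} (t b^ℓ) = f (t b^ℓ b^{-(k-1)}) ⋯ f (t b^ℓ b⁻¹) · f (t b^ℓ)` equals
`a i · a (i+1) ⋯ a (j-1)` whenever `1 ≤ i ≤ j ≤ n+1` satisfy
`max {e (j-1), e (i-1) + k} ≤ ℓ ≤ min {e i + k - 1, e j - 1}`, with the conventions
`e 0 = -∞` and `e (n+1) = +∞` (so the corresponding inequalities are vacuous at the
boundary, and empty products are the identity). -/
theorem pow_function_evaluation {A B : Type*} [Group A] [Group B]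
    (b t : B) (hb : ¬ IsOfFinOrder b) (n : ℕ) (e : ℕ → ℤ) (a : ℕ → A) (f : B → A)
    (hmono : ∀ i j : ℕ, 1 ≤ i → i < j → j ≤ n → e i < e j)
    (hval : ∀ i : ℕ, 1 ≤ i → i ≤ n → f (t * b ^ e i) = a i)
    (hoff : ∀ c : B, (∀ i : ℕ, 1 ≤ i → i ≤ n → c ≠ t * b ^ e i) → f c = 1)
    (k : ℕ) (hk : 0 < k) (ℓ : ℤ) (i j : ℕ)
    (hi : 1 ≤ i) (hij : i ≤ j) (hjn : j ≤ n + 1)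
    (h1 : 2 ≤ j → e (j - 1) ≤ ℓ)
    (h2 : 2 ≤ i → e (i - 1) + (k : ℤ) ≤ ℓ)
    (h3 : i ≤ n → ℓ ≤ e i + (k : ℤ) - 1)
    (h4 : j ≤ n → ℓ ≤ e j - 1) :
    ((List.range k).map fun m => f (t * b ^ ℓ * (b ^ (k - 1 - m))⁻¹)).prod =
      ((List.range (j - i)).map fun m => a (i + m)).prod :=
  pow_function_evaluation_aux b t hb n e a f hmono hval hoff k ℓ i j hi hij hjn h1 h2 h3 h4
end

section
/- Let A be a nontrivial group, a ∈ A with a ≠ 1, and b, c ∈ B with b of infinite order. Define f ∈ A^(B) by f(1) = a, f(c) = a⁻¹ (assuming c ≠ 1), and f(β) = 1 otherwise. Then (b, 1) and (b, f) are conjugate in A ≀ B if, and only if, c ∈ ⟨b⟩. -/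
lemma fin_two_support {A B : Type*} [Group A] [Group B] [DecidableEq B] (u v : A) (c : B) :
    (Function.mulSupport fun β : B => if β = 1 then u else if β = c then v else 1).Finite := by
  apply Set.Finite.subset (Set.toFinite {(1 : B), c})
  intro z hz
  simp only [Function.mem_mulSupport] at hz
  by_contra h
  simp only [Set.mem_insert_iff, Set.mem_singleton_iff, not_or] at h
  simp [h.1, h.2] at hz

/-- Let `A` be a nontrivial group, `a ∈ A` with `a ≠ 1`, and `b c ∈ B` with `b` of
infinite order and `c ≠ 1`. Define `f ∈ A^(B)` by `f 1 = a`, `f c = a⁻¹`, and `f β = 1`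
otherwise. Then `(b, 1)` and `(b, f)` are conjugate in `A ≀ B` iff `c ∈ ⟨b⟩`. -/
theorem conj_iff_cyclic_subgroup_membership {A B : Type*} [Group A] [Group B]
    [DecidableEq B] (a : A) (ha : a ≠ 1) (b c : B) (hb : ¬ IsOfFinOrder b) (hc : c ≠ 1) :
    IsConj (⟨b, 1, by simp⟩ : Wreath A B)
        ⟨b, fun β => if β = 1 then a else if β = c then a⁻¹ else 1,
          fin_two_support a a⁻¹ c⟩ ↔
      c ∈ Subgroup.zpowers b := by
  classical
  have hinj : Function.Injective fun k : ℤ => b ^ k :=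
    injective_zpow_iff_not_isOfFinOrder.mpr hb
  rw [isConj_iff]
  constructor
  · rintro ⟨g, hg⟩
    rw [mul_inv_eq_iff_eq_mul] at hg
    have hbcom : g.b * b = b * g.b := congrArg Wreath.b hg
    have hfe : ∀ z : B, g.f (z * b⁻¹) =
        (if z * g.b⁻¹ = 1 then a else if z * g.b⁻¹ = c then a⁻¹ else 1) * g.f z := by
      intro z
      have h0 := congrFun (congrArg Wreath.f hg) z
      simp only [Wreath.mul_f, Pi.one_apply, mul_one] at h0
      exact h0
    by_contra hcn
    set d := g.b with hd
    have hdb : d * b⁻¹ = b⁻¹ * d := (Commute.inv_right (show Commute d b from hbcom)).eq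
    set H : ℤ → A := fun k => g.f (b ^ k * d) with hH
    have key : ∀ k : ℤ, H (k - 1) =
        (if b ^ k = 1 then a else if b ^ k = c then a⁻¹ else 1) * H k := by
      intro k
      have h0 := hfe (b ^ k * d)
      rw [mul_inv_cancel_right] at h0
      rw [mul_assoc, hdb, ← mul_assoc, ← zpow_sub_one] at h0
      exact h0
    have h1 : ∀ k : ℤ, (b ^ k = 1) ↔ k = 0 := by
      intro k; rw [← zpow_zero b]; exact ⟨fun h => hinj h, fun h => by rw [h]⟩
    have h2 : ∀ k : ℤ, b ^ k ≠ c := by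
      intro k h; exact hcn ⟨k, h⟩
    have key2 : ∀ k : ℤ, k ≠ 0 → H (k - 1) = H k := by
      intro k hk
      rw [key k]
      simp [h1 k, hk, h2 k]
    have keym1 : H (-1) = a * H 0 := by
      have h0 := key 0
      simpa using h0
    have const_pos : ∀ m : ℕ, H m = H 0 := by
      intro m
      induction m with
      | zero => rfl
      | succ m ih =>
        have h0 := key2 ((m : ℤ) + 1) (by omega)
        rw [show ((m : ℤ) + 1) - 1 = (m : ℤ) by ring] at h0
        push_cast
        rw [← h0, ih]
    have const_neg : ∀ m : ℕ, H (-1 - m) = H (-1) := by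
      intro m
      induction m with
      | zero => simp
      | succ m ih =>
        have h0 := key2 (-1 - (m : ℤ)) (by omega)
        push_cast
        rw [show (-1 : ℤ) - ((m : ℤ) + 1) = (-1 - (m : ℤ)) - 1 by ring, h0, ih]
    have hSfin : {k : ℤ | H k ≠ 1}.Finite := by
      have he : {k : ℤ | H k ≠ 1} = (fun k : ℤ => b ^ k * d) ⁻¹' Function.mulSupport g.f :=
        rfl
      rw [he]
      refine g.fin.preimage (Function.Injective.injOn ?_)
      intro x y hxy
      exact hinj (mul_right_cancel (show b ^ x * d = b ^ y * d from hxy))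
    have hpos : H 0 = 1 := by
      have hr : (Set.range ((↑) : ℕ → ℤ)).Infinite :=
        Set.infinite_range_of_injective (fun x y h => by omega)
      obtain ⟨z, hz⟩ := (hr.diff hSfin).nonempty
      obtain ⟨⟨m, rfl⟩, hz2⟩ := hz
      simp only [Set.mem_setOf_eq, not_not] at hz2
      rw [← const_pos m, hz2]
    have hneg : H (-1) = 1 := by
      have hr : (Set.range (fun m : ℕ => -1 - (m : ℤ))).Infinite :=
        Set.infinite_range_of_injective (fun x y h => by omega)
      obtain ⟨z, hz⟩ := (hr.diff hSfin).nonempty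
      obtain ⟨⟨m, rfl⟩, hz2⟩ := hz
      simp only [Set.mem_setOf_eq, not_not] at hz2
      rw [← const_neg m, hz2]
    rw [keym1, hpos, mul_one] at hneg
    exact ha hneg
  · intro hcm
    obtain ⟨n, hn⟩ := Subgroup.mem_zpowers_iff.mp hcm
    have hn0 : n ≠ 0 := by rintro rfl; exact hc (by rw [← hn, zpow_zero])
    set e : ℤ → A := fun k => if 0 ≤ k ∧ k < n then a⁻¹ else if n ≤ k ∧ k < 0 then a else 1
      with he
    set h : B → A := fun z => if hz : ∃ k : ℤ, b ^ k = z then e hz.choose else 1 with hh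
    have hbk : ∀ k : ℤ, h (b ^ k) = e k := by
      intro k
      have hz : ∃ k' : ℤ, b ^ k' = b ^ k := ⟨k, rfl⟩
      rw [hh]
      simp only [dif_pos hz]
      congr 1
      exact hinj hz.choose_spec
    have hnot : ∀ z : B, (¬ ∃ k : ℤ, b ^ k = z) → h z = 1 := fun z hz => dif_neg hz
    have hfin : (Function.mulSupport h).Finite := by
      apply Set.Finite.subset (Set.Finite.image (fun k : ℤ => b ^ k)
        (Set.finite_Icc (min n 0) (max n 0)))
      intro z hz
      rw [Function.mem_mulSupport] at hz
      by_cases hz' : ∃ k : ℤ, b ^ k = z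
      · obtain ⟨k, rfl⟩ := hz'
        rw [hbk k] at hz
        refine ⟨k, ?_, rfl⟩
        simp only [Set.mem_Icc]
        by_contra hk
        refine hz ?_
        have hek : e k = if 0 ≤ k ∧ k < n then a⁻¹ else if n ≤ k ∧ k < 0 then a else 1 := rfl
        rw [hek, if_neg (by omega), if_neg (by omega)]
      · exact absurd (hnot z hz') hz
    refine ⟨⟨1, h, hfin⟩, ?_⟩
    rw [mul_inv_eq_iff_eq_mul]
    apply Wreath.ext'
    · simp
    · funext z
      show h (z * b⁻¹) * (1 : B → A) z =
        (if z * 1⁻¹ = 1 then a else if z * 1⁻¹ = c then a⁻¹ else 1) * h z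
      rw [Pi.one_apply, mul_one, inv_one, mul_one]
      by_cases hz : ∃ k : ℤ, b ^ k = z
      · obtain ⟨k, rfl⟩ := hz
        rw [← zpow_sub_one, hbk, hbk]
        have h1 : (b ^ k = 1) ↔ k = 0 := by
          rw [← zpow_zero b]; exact ⟨fun h => hinj h, fun h => by rw [h]⟩
        have h2 : (b ^ k = c) ↔ k = n := by
          rw [← hn]; exact ⟨fun h => hinj h, fun h => by rw [h]⟩
        have hek : ∀ m : ℤ, e m = if 0 ≤ m ∧ m < n then a⁻¹ else if n ≤ m ∧ m < 0 then a else 1 :=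
          fun m => rfl
        rw [hek, hek]
        simp only [h1, h2]
        split_ifs <;> first | (exfalso; omega) | simp
      · have hz1 : ¬ ∃ k : ℤ, b ^ k = z * b⁻¹ := by
          rintro ⟨k, hk⟩
          exact hz ⟨k + 1, by rw [zpow_add_one, hk, inv_mul_cancel_right]⟩
        have hzc1 : z ≠ 1 := fun h => hz ⟨0, by rw [zpow_zero, h]⟩
        have hzcc : z ≠ c := fun h => hz ⟨n, by rw [hn, h]⟩
        rw [hnot _ hz1, hnot _ hz]
        simp [hzc1, hzcc]
end
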